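/- For the Ising broadcast process on T(d,h) with fixed d ≥ 2 and ρ ∈ (0,1) satisfying dρ² > 1, the fourth moment satisfies M_{d,ρ,h}(4)/((dρ)^{4h}) → C_{d,ρ}(4) as h → ∞, where C_{d,ρ}(4) := (4(d−1)ρ²·C_{d,ρ}(3) + 3(d−1)·C_{d,ρ}(2)² + 6(d−1)(d−2)ρ²·C_{d,ρ}(2) + (d−1)(d−2)(d−3)ρ⁴)/(d³ρ⁴ − 1), with C_{d,ρ}(2) := (1 − 1/d)·dρ²/(dρ² − 1) and C_{d,ρ}(3) := (1/((dρ)² − 1))·(3·((d−1)²/d)·(dρ²/(dρ² − 1)) + (dρ)²·(1 − 1/d)(1 − 2/d)). -/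

import Mathlib

open Finset

noncomputable section

/-- A configuration of the rooted `d`-ary tree of height `h` with values in `S`:
a vertex at level `ℓ ≤ h` is a path from the root, i.e. a function `Fin ℓ → Fin d`,
and the configuration assigns an element of `S` to every vertex. -/
abbrev TreeConfig (d h : ℕ) (S : Type) := ∀ ℓ : Fin (h + 1), (Fin ℓ.val → Fin d) → S

/-- The value at the root of the tree. -/
def rootOf {d h : ℕ} {S : Type} (σ : TreeConfig d h S) : S :=
  σ ⟨0, Nat.succ_pos h⟩ Fin.elim0

/-- The values at the leaves (level `h`) of the tree, read as a function on root-to-leaf paths. -/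
def leavesOf {d h : ℕ} {S : Type} (σ : TreeConfig d h S) : (Fin h → Fin d) → S :=
  σ ⟨h, Nat.lt_succ_self h⟩

/-- Product over all edges of the tree of an edge weight `W (parent value) (child value)`. -/
def edgeProd {S : Type} (d h : ℕ) (W : S → S → ℝ) (σ : TreeConfig d h S) : ℝ :=
  ∏ ℓ : Fin h, ∏ f : Fin (ℓ.val + 1) → Fin d,
    W (σ ⟨ℓ.val, Nat.lt_succ_of_lt ℓ.isLt⟩ fun i => f i.castSucc)
      (σ ⟨ℓ.val + 1, Nat.succ_lt_succ ℓ.isLt⟩ f)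

/-- Probability of a full configuration under the broadcast process with root prior `ν`
and broadcast channel `W`. -/
def broadcastW {S : Type} (d h : ℕ) (ν : S → ℝ) (W : S → S → ℝ) (σ : TreeConfig d h S) : ℝ :=
  ν (rootOf σ) * edgeProd d h W σ

/-- The real spin value `±1` of a Boolean spin. -/
def spinVal (b : Bool) : ℝ := if b then 1 else -1

/-- The Ising broadcast channel: copy the parent spin with probability `(1+ρ)/2`. -/
def isingEdge (ρ : ℝ) (a b : Bool) : ℝ := if a = b then (1 + ρ) / 2 else (1 - ρ) / 2

/-- Probability of a configuration under the Ising broadcast process with uniform root. -/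
def isingW (d h : ℕ) (ρ : ℝ) (σ : TreeConfig d h Bool) : ℝ :=
  broadcastW d h (fun _ => (1 : ℝ) / 2) (isingEdge ρ) σ

/-- Probability of a configuration under the Ising broadcast process with the root
conditioned to equal `r`. -/
def isingWRooted (d h : ℕ) (ρ : ℝ) (r : Bool) (σ : TreeConfig d h Bool) : ℝ :=
  (if rootOf σ = r then 1 else 0) * edgeProd d h (isingEdge ρ) σ

/-- The sum of the `d^h` leaf spins of a configuration. -/
def leafSum (d h : ℕ) (σ : TreeConfig d h Bool) : ℝ :=
  ∑ f : Fin h → Fin d, spinVal (leavesOf σ f)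

/-- Expectation of a function of the configuration under the Ising broadcast process. -/
def isingExp (d h : ℕ) (ρ : ℝ) (g : TreeConfig d h Bool → ℝ) : ℝ :=
  ∑ σ : TreeConfig d h Bool, isingW d h ρ σ * g σ

/-- `M_{d,ρ,h}(k) = E[(Σ_ℓ X_ℓ)^k | X_root = +1]`. -/
def isingMoment (d h : ℕ) (ρ : ℝ) (k : ℕ) : ℝ :=
  ∑ σ : TreeConfig d h Bool, isingWRooted d h ρ true σ * leafSum d h σ ^ k

/-- Variance of the sum of the leaf spins under the (true) Ising broadcast process. -/
def isingVar (d h : ℕ) (ρ : ℝ) : ℝ :=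
  isingExp d h ρ (fun σ => leafSum d h σ ^ 2) - isingExp d h ρ (leafSum d h) ^ 2

/-- Marginal probability of a leaf spin assignment under the Ising broadcast process. -/
def leafW (d w : ℕ) (ρ : ℝ) (y : (Fin w → Fin d) → Bool) : ℝ :=
  ∑ σ : TreeConfig d w Bool, if leavesOf σ = y then isingW d w ρ σ else 0

/-- Marginal probability of a leaf spin assignment given the root equals `r`. -/
def leafWRooted (d w : ℕ) (ρ : ℝ) (r : Bool) (y : (Fin w → Fin d) → Bool) : ℝ :=
  ∑ σ : TreeConfig d w Bool, if leavesOf σ = y then isingWRooted d w ρ r σ else 0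

/-- Posterior mean `E[X_root | X_leaves = y]` of the root spin given the leaves. -/
def rootPostMean (d w : ℕ) (ρ : ℝ) (y : (Fin w → Fin d) → Bool) : ℝ :=
  (∑ σ : TreeConfig d w Bool,
      if leavesOf σ = y then isingW d w ρ σ * spinVal (rootOf σ) else 0) / leafW d w ρ y

/-- `q_w = E[E[X_root | X_leaves]^2]` for the Ising broadcast process on `T(d,w)`. -/
def qIsing (d w : ℕ) (ρ : ℝ) : ℝ :=
  ∑ y : (Fin w → Fin d) → Bool, leafW d w ρ y * rootPostMean d w ρ y ^ 2

/-- The law `D_m` of the height of the least common ancestor of a uniformly random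
adjacent pair of depth-`w` subtrees: `P(D_m = s) = (d-1) d^{m-s} / (d^m - 1)` for `1 ≤ s ≤ m`. -/
def lcaLaw (d m : ℕ) (s : ℕ) : ℝ :=
  if 1 ≤ s ∧ s ≤ m then ((d : ℝ) - 1) * (d : ℝ) ^ (m - s) / ((d : ℝ) ^ m - 1) else 0

/-- `α = E_{s ∼ D_m}[ρ^{2s}]`. -/
def alphaAR (d m : ℕ) (ρ : ℝ) : ℝ := ∑ s ∈ Finset.Icc 1 m, lcaLaw d m s * ρ ^ (2 * s)

/-- Joint law of the two subtree root spins when their least common ancestor is at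
height `s` above them: a pair of uniform `±1` spins with correlation `ρ^{2s}`. -/
def pairRootW (ρ : ℝ) (s : ℕ) (r r' : Bool) : ℝ :=
  (1 + spinVal r * spinVal r' * ρ ^ (2 * s)) / 4

/-- One-step transition of the autoregressive Ising broadcast process: the conditional law
of the next block of `d^w` leaves given that the previous block equals `y`, averaged over a
least common ancestor height `s ∼ D_m`. -/
def arStep (d w m : ℕ) (ρ : ℝ) (y y' : (Fin w → Fin d) → Bool) : ℝ :=
  ∑ s ∈ Finset.Icc 1 m, lcaLaw d m s *
    ((∑ r : Bool, ∑ r' : Bool,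
        pairRootW ρ s r r' * leafWRooted d w ρ r y * leafWRooted d w ρ r' y') / leafW d w ρ y)

/-- Joint probability of the blocks `Y 0, …, Y (n-1)` of the autoregressive Ising
broadcast process with context depth `w`. -/
def arWeight (d w m n : ℕ) (ρ : ℝ) (Y : Fin n → ((Fin w → Fin d) → Bool)) : ℝ :=
  (if hn : 0 < n then leafW d w ρ (Y ⟨0, hn⟩) else 1) *
    ∏ i : Fin (n - 1),
      arStep d w m ρ (Y ⟨i.val, by have := i.isLt; omega⟩)
        (Y ⟨i.val + 1, by have := i.isLt; omega⟩)

/-- Expectation of a function of the blocks under the autoregressive Ising broadcast process. -/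
def arExp (d w m n : ℕ) (ρ : ℝ) (g : (Fin n → ((Fin w → Fin d) → Bool)) → ℝ) : ℝ :=
  ∑ Y : Fin n → ((Fin w → Fin d) → Bool), arWeight d w m n ρ Y * g Y

/-- The block sum `Z_i = Σ_ℓ (Y_i)_ℓ`. -/
def blockSum (d w : ℕ) (y : (Fin w → Fin d) → Bool) : ℝ :=
  ∑ f : Fin w → Fin d, spinVal (y f)

/-- The total sum `Σ_i Z_i` of all `d^h` generated spins. -/
def arTotal (d w n : ℕ) (Y : Fin n → ((Fin w → Fin d) → Bool)) : ℝ :=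
  ∑ i : Fin n, blockSum d w (Y i)

/-- Variance of the total sum of spins generated by the autoregressive Ising broadcast
process with context depth `w` on `T(d,h)`. -/
def arVar (d h w : ℕ) (ρ : ℝ) : ℝ :=
  arExp d w (h - w) (d ^ (h - w)) ρ (fun Y => arTotal d w (d ^ (h - w)) Y ^ 2)
    - arExp d w (h - w) (d ^ (h - w)) ρ (arTotal d w (d ^ (h - w))) ^ 2

/-- Second moment of the total sum of spins of the autoregressive process. -/
def arSecond (d h w : ℕ) (ρ : ℝ) : ℝ :=
  arExp d w (h - w) (d ^ (h - w)) ρ (fun Y => arTotal d w (d ^ (h - w)) Y ^ 2)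

/-- Fourth moment of the total sum of spins of the autoregressive process. -/
def arFourth (d h w : ℕ) (ρ : ℝ) : ℝ :=
  arExp d w (h - w) (d ^ (h - w)) ρ (fun Y => arTotal d w (d ^ (h - w)) Y ^ 4)

/-- `C_{d,ρ}(2) = (1 - 1/d)·dρ²/(dρ² - 1)`. -/
def C2const (d : ℕ) (ρ : ℝ) : ℝ := (1 - 1 / (d : ℝ)) * ((d : ℝ) * ρ ^ 2) / ((d : ℝ) * ρ ^ 2 - 1)

/-- `α* = Σ_{s ≥ 1} (1 - 1/d)(1/d)^{s-1} ρ^{2s}`. -/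
def alphaStar (d : ℕ) (ρ : ℝ) : ℝ :=
  ∑' s : ℕ, (1 - 1 / (d : ℝ)) * (1 / (d : ℝ)) ^ s * ρ ^ (2 * (s + 1))

/-- `A_{d,ρ}(2) = C_{d,ρ}(2) + 2α*/(1 - α* q*)`. -/
def A2const (d : ℕ) (ρ : ℝ) (qstar : ℝ) : ℝ :=
  C2const d ρ + 2 * alphaStar d ρ / (1 - alphaStar d ρ * qstar)

end

/-- `C_{d,ρ}(3)`. -/
noncomputable def C3const (d : ℕ) (ρ : ℝ) : ℝ :=
  (1 / (((d : ℝ) * ρ) ^ 2 - 1)) *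
    (3 * (((d : ℝ) - 1) ^ 2 / (d : ℝ)) * ((d : ℝ) * ρ ^ 2 / ((d : ℝ) * ρ ^ 2 - 1)) +
      ((d : ℝ) * ρ) ^ 2 * (1 - 1 / (d : ℝ)) * (1 - 2 / (d : ℝ)))

/-- `C_{d,ρ}(4)`. -/
noncomputable def C4const (d : ℕ) (ρ : ℝ) : ℝ :=
  (4 * ((d : ℝ) - 1) * ρ ^ 2 * C3const d ρ + 3 * ((d : ℝ) - 1) * C2const d ρ ^ 2 +
      6 * ((d : ℝ) - 1) * ((d : ℝ) - 2) * ρ ^ 2 * C2const d ρ +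
      ((d : ℝ) - 1) * ((d : ℝ) - 2) * ((d : ℝ) - 3) * ρ ^ 4) /
    ((d : ℝ) ^ 3 * ρ ^ 4 - 1)

/-!
Cutting `T(d, h+1)` at the root, the leaf sum given the root spin is a sum of `d` i.i.d. copies
of the leaf sum of `T(d, h)` whose root agrees with the parent with probability `(1+ρ)/2`. Flipping
all spins shows that the `k`-th moment with root `-1` is `(-1)^k M_h(k)`, so expanding the power of
the sum expresses `M_{h+1}(k)` through `M_h(1), …, M_h(k)`, and `M_h(1) = (dρ)^h`. After
dividing by `(dρ)^{kh}`, the normalized moment satisfies `c(h+1) = r c(h) + b(h)` with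
`r = 1/(dρ²), 1/(d²ρ²), 1/(d³ρ⁴)` for `k = 2, 3, 4`, each `< 1` when `dρ² > 1`, while `b(h)`
converges by the lower cases; hence `c(h)` tends to the fixed point, which is `C_{d,ρ}(k)`.
-/

section IidMoments

variable {Ω R : Type*} [Fintype Ω] [CommRing R]

def weightedMoment (p S : Ω → R) (k : ℕ) : R := ∑ ω, p ω * S ω ^ k

def iidSumMoment (p S : Ω → R) (n k : ℕ) : R :=
  ∑ τ : Fin n → Ω, (∏ j, p (τ j)) * (∑ j, S (τ j)) ^ k

theorem iidSumMoment_zero_copies (p S : Ω → R) (k : ℕ) :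
    iidSumMoment p S 0 k = if k = 0 then 1 else 0 := by
  rcases k with _ | k <;> simp [iidSumMoment]

theorem iidSumMoment_succ (p S : Ω → R) (n k : ℕ) :
    iidSumMoment p S (n + 1) k =
      ∑ i ∈ range (k + 1),
        (k.choose i : R) * weightedMoment p S i * iidSumMoment p S n (k - i) := by
  have expand : ∀ (ω : Ω) (τ : Fin n → Ω),
      (∏ j, p ((Fin.cons ω τ : Fin (n + 1) → Ω) j))
          * (∑ j, S ((Fin.cons ω τ : Fin (n + 1) → Ω) j)) ^ k
        = ∑ i ∈ range (k + 1), (k.choose i : R) * (p ω * S ω ^ i)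
            * ((∏ j, p (τ j)) * (∑ j, S (τ j)) ^ (k - i)) := by
    intro ω τ
    rw [Fin.prod_univ_succ, Fin.sum_univ_succ]
    simp only [Fin.cons_zero, Fin.cons_succ]
    rw [add_pow, mul_sum]
    exact sum_congr rfl fun i _ => by ring
  rw [iidSumMoment, ← (Fin.consEquiv fun _ => Ω).sum_comp, Fintype.sum_prod_type]
  simp only [Fin.consEquiv_apply, expand]
  rw [sum_congr rfl fun ω _ => sum_comm, sum_comm]
  simp only [weightedMoment, iidSumMoment, mul_sum, sum_mul]
  exact sum_congr rfl fun i _ => sum_comm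

variable {p S : Ω → R}

theorem iidSumMoment_mass (n : ℕ) : iidSumMoment p S n 0 = weightedMoment p S 0 ^ n := by
  induction n with
  | zero => simp [iidSumMoment_zero_copies]
  | succ n ih => simp [iidSumMoment_succ, ih, pow_succ, mul_comm]

section UnitMass

variable (h0 : weightedMoment p S 0 = 1)
include h0

theorem iidSumMoment_one (n : ℕ) : iidSumMoment p S n 1 = n * weightedMoment p S 1 := by
  induction n with
  | zero => simp [iidSumMoment_zero_copies]
  | succ n ih =>
    simp [iidSumMoment_succ, sum_range_succ, iidSumMoment_mass, h0, ih]
    ring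

theorem iidSumMoment_two (n : ℕ) :
    iidSumMoment p S n 2 =
      n * weightedMoment p S 2 + n * (n - 1) * weightedMoment p S 1 ^ 2 := by
  induction n with
  | zero => simp [iidSumMoment_zero_copies]
  | succ n ih =>
    simp [iidSumMoment_succ, sum_range_succ, iidSumMoment_mass, h0, ih, iidSumMoment_one h0,
      Nat.choose]
    ring

theorem iidSumMoment_three (n : ℕ) :
    iidSumMoment p S n 3 = n * weightedMoment p S 3
      + 3 * (n * (n - 1)) * weightedMoment p S 2 * weightedMoment p S 1
      + n * (n - 1) * (n - 2) * weightedMoment p S 1 ^ 3 := by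
  induction n with
  | zero => simp [iidSumMoment_zero_copies]
  | succ n ih =>
    simp [iidSumMoment_succ, sum_range_succ, iidSumMoment_mass, h0, ih, iidSumMoment_one h0,
      iidSumMoment_two h0, Nat.choose]
    ring

theorem iidSumMoment_four (n : ℕ) :
    iidSumMoment p S n 4 = n * weightedMoment p S 4
      + 4 * (n * (n - 1)) * weightedMoment p S 3 * weightedMoment p S 1
      + 3 * (n * (n - 1)) * weightedMoment p S 2 ^ 2
      + 6 * (n * (n - 1) * (n - 2)) * weightedMoment p S 2 * weightedMoment p S 1 ^ 2
      + n * (n - 1) * (n - 2) * (n - 3) * weightedMoment p S 1 ^ 4 := by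
  induction n with
  | zero => simp [iidSumMoment_zero_copies]
  | succ n ih =>
    simp [iidSumMoment_succ, sum_range_succ, iidSumMoment_mass, h0, ih, iidSumMoment_one h0,
      iidSumMoment_two h0, iidSumMoment_three h0, Nat.choose]
    ring

end UnitMass

end IidMoments

section TreeDecomposition

variable {d h : ℕ} {S : Type}

def treeConfigSuccEquiv (d h : ℕ) (S : Type) :
    (S × (Fin d → TreeConfig d h S)) ≃ TreeConfig d (h + 1) S where
  toFun x := fun ℓ =>
    match ℓ with
    | ⟨0, _⟩ => fun _ => x.1
    | ⟨m + 1, hm⟩ => fun f => x.2 (f 0) ⟨m, Nat.lt_of_succ_lt_succ hm⟩ (fun k => f k.succ)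
  invFun σ := (rootOf σ, fun j ℓ g => σ ℓ.succ (Fin.cons j g))
  left_inv x := by
    obtain ⟨b, τ⟩ := x
    refine Prod.ext rfl ?_
    funext j ℓ g
    show τ ((Fin.cons j g : Fin (ℓ.val + 1) → Fin d) 0) ⟨ℓ.val, ℓ.isLt⟩
        (fun k => (Fin.cons j g : Fin (ℓ.val + 1) → Fin d) k.succ) = τ j ℓ g
    simp
  right_inv σ := by
    funext ℓ f
    obtain ⟨m, hm⟩ := ℓ
    match m, hm with
    | 0, hm =>
      show σ ⟨0, Nat.succ_pos _⟩ Fin.elim0 = σ ⟨0, hm⟩ f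
      exact congrArg _ (Subsingleton.elim _ _)
    | m + 1, hm =>
      show σ ⟨m + 1, hm⟩ (Fin.cons (f 0) (fun k => f k.succ)) = σ ⟨m + 1, hm⟩ f
      exact congrArg _ (Fin.cons_self_tail f)

theorem treeConfigSuccEquiv_succ (b : S) (τ : Fin d → TreeConfig d h S) (m : ℕ)
    (hm : m + 1 < h + 2) (f : Fin (m + 1) → Fin d) :
    treeConfigSuccEquiv d h S (b, τ) ⟨m + 1, hm⟩ f
      = τ (f 0) ⟨m, Nat.lt_of_succ_lt_succ hm⟩ (fun k => f k.succ) := rfl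

theorem rootOf_treeConfigSuccEquiv (b : S) (τ : Fin d → TreeConfig d h S) :
    rootOf (treeConfigSuccEquiv d h S (b, τ)) = b := rfl

theorem leavesOf_treeConfigSuccEquiv (b : S) (τ : Fin d → TreeConfig d h S)
    (j : Fin d) (g : Fin h → Fin d) :
    leavesOf (treeConfigSuccEquiv d h S (b, τ)) (Fin.cons j g) = leavesOf (τ j) g := by
  rw [leavesOf, treeConfigSuccEquiv_succ]
  simp [leavesOf, Fin.cons_succ]

theorem leafSum_treeConfigSuccEquiv (b : Bool) (τ : Fin d → TreeConfig d h Bool) :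
    leafSum d (h + 1) (treeConfigSuccEquiv d h Bool (b, τ)) = ∑ j, leafSum d h (τ j) := by
  rw [leafSum, ← (Fin.consEquiv fun _ => Fin d).sum_comp, Fintype.sum_prod_type]
  exact sum_congr rfl fun j _ => sum_congr rfl fun g _ =>
    congrArg spinVal (leavesOf_treeConfigSuccEquiv b τ j g)

theorem edgeProd_treeConfigSuccEquiv_rootEdges (W : S → S → ℝ) (b : S)
    (τ : Fin d → TreeConfig d h S) (p0 : 0 < h + 2) (p1 : 0 + 1 < h + 2) :
    ∏ f : Fin 1 → Fin d,
        W (treeConfigSuccEquiv d h S (b, τ) ⟨0, p0⟩ (fun k => f k.castSucc))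
          (treeConfigSuccEquiv d h S (b, τ) ⟨0 + 1, p1⟩ f)
      = ∏ j, W b (rootOf (τ j)) := by
  rw [← (Equiv.funUnique (Fin 1) (Fin d)).symm.prod_comp]
  refine prod_congr rfl fun j _ => ?_
  rw [treeConfigSuccEquiv_succ, rootOf]
  exact congrArg₂ W rfl (congrArg _ (Subsingleton.elim _ _))

theorem edgeProd_treeConfigSuccEquiv_lowerEdges (W : S → S → ℝ) (b : S)
    (τ : Fin d → TreeConfig d h S) (m : ℕ) (hm : m < h) :
    ∏ f : Fin (m + 1 + 1) → Fin d,
        W (treeConfigSuccEquiv d h S (b, τ) ⟨m + 1, by omega⟩ (fun k => f k.castSucc))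
          (treeConfigSuccEquiv d h S (b, τ) ⟨m + 1 + 1, by omega⟩ f)
      = ∏ j, ∏ g : Fin (m + 1) → Fin d,
          W (τ j ⟨m, by omega⟩ (fun k => g k.castSucc)) (τ j ⟨m + 1, by omega⟩ g) := by
  rw [← (Fin.consEquiv fun _ => Fin d).prod_comp, Fintype.prod_prod_type]
  refine prod_congr rfl fun j _ => prod_congr rfl fun g _ => ?_
  show W (treeConfigSuccEquiv d h S (b, τ) ⟨m + 1, _⟩
      (fun k => (Fin.cons j g : Fin (m + 1 + 1) → Fin d) k.castSucc))
      (treeConfigSuccEquiv d h S (b, τ) ⟨m + 1 + 1, _⟩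
        (Fin.cons j g : Fin (m + 1 + 1) → Fin d)) = _
  rw [treeConfigSuccEquiv_succ, treeConfigSuccEquiv_succ]
  simp only [Fin.castSucc_zero, ← Fin.succ_castSucc, Fin.cons_zero, Fin.cons_succ]

theorem edgeProd_treeConfigSuccEquiv (W : S → S → ℝ) (b : S)
    (τ : Fin d → TreeConfig d h S) :
    edgeProd d (h + 1) W (treeConfigSuccEquiv d h S (b, τ)) =
      ∏ j, (W b (rootOf (τ j)) * edgeProd d h W (τ j)) := by
  rw [edgeProd, Fin.prod_univ_succ, prod_mul_distrib]
  congr 1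
  · exact edgeProd_treeConfigSuccEquiv_rootEdges W b τ _ _
  · rw [prod_congr rfl fun i _ => edgeProd_treeConfigSuccEquiv_lowerEdges W b τ i.val i.isLt,
      prod_comm]
    rfl

end TreeDecomposition

section IsingMoments

variable {d h : ℕ} {ρ : ℝ}

noncomputable def rootedMoment (d h : ℕ) (ρ : ℝ) (r : Bool) (k : ℕ) : ℝ :=
  ∑ σ : TreeConfig d h Bool, isingWRooted d h ρ r σ * leafSum d h σ ^ k

noncomputable def subtreeWeight (d h : ℕ) (ρ : ℝ) (r : Bool) (σ : TreeConfig d h Bool) :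
    ℝ :=
  isingEdge ρ r (rootOf σ) * edgeProd d h (isingEdge ρ) σ

def flipConfig (d h : ℕ) : TreeConfig d h Bool ≃ TreeConfig d h Bool :=
  Equiv.piCongrRight fun _ => Equiv.piCongrRight fun _ => Equiv.boolNot

theorem isingEdge_not (ρ : ℝ) (a b : Bool) : isingEdge ρ (!a) (!b) = isingEdge ρ a b := by
  cases a <;> cases b <;> rfl

theorem spinVal_not (b : Bool) : spinVal (!b) = -spinVal b := by
  cases b <;> simp [spinVal]

theorem rootOf_flipConfig (σ : TreeConfig d h Bool) : rootOf (flipConfig d h σ) = !rootOf σ :=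
  rfl

theorem edgeProd_flipConfig (σ : TreeConfig d h Bool) :
    edgeProd d h (isingEdge ρ) (flipConfig d h σ) = edgeProd d h (isingEdge ρ) σ :=
  prod_congr rfl fun _ _ => prod_congr rfl fun _ _ => isingEdge_not ..

theorem leafSum_flipConfig (σ : TreeConfig d h Bool) :
    leafSum d h (flipConfig d h σ) = -leafSum d h σ := by
  rw [leafSum, leafSum, ← sum_neg_distrib]
  exact sum_congr rfl fun _ _ => spinVal_not _

theorem rootedMoment_false (k : ℕ) :
    rootedMoment d h ρ false k = (-1) ^ k * isingMoment d h ρ k := by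
  rw [rootedMoment, ← (flipConfig d h).sum_comp, isingMoment, mul_sum]
  refine sum_congr rfl fun σ _ => ?_
  rw [isingWRooted, isingWRooted, rootOf_flipConfig, edgeProd_flipConfig, leafSum_flipConfig,
    neg_pow]
  cases rootOf σ <;> simp [mul_left_comm]

def treeConfigZeroEquiv (d : ℕ) (S : Type) : S ≃ TreeConfig d 0 S where
  toFun b := fun _ _ => b
  invFun σ := rootOf σ
  left_inv _ := rfl
  right_inv σ := by
    funext ℓ f
    obtain ⟨m, hm⟩ := ℓ
    obtain rfl : m = 0 := by omega
    exact congrArg (σ _) (Subsingleton.elim _ _)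

theorem rootedMoment_height_zero (r : Bool) (k : ℕ) :
    rootedMoment d 0 ρ r k = spinVal r ^ k := by
  rw [rootedMoment, ← (treeConfigZeroEquiv d Bool).sum_comp, Fintype.sum_bool]
  have edges : ∀ b, edgeProd d 0 (isingEdge ρ) (treeConfigZeroEquiv d Bool b) = 1 :=
    fun _ => prod_of_isEmpty _
  have leaves : ∀ b, leafSum d 0 (treeConfigZeroEquiv d Bool b) = spinVal b :=
    fun _ => Fintype.sum_unique _
  simp only [isingWRooted, edges, leaves]
  cases r <;> simp [rootOf, treeConfigZeroEquiv]

theorem rootedMoment_succ (r : Bool) (k : ℕ) :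
    rootedMoment d (h + 1) ρ r k = iidSumMoment (subtreeWeight d h ρ r) (leafSum d h) d k := by
  rw [rootedMoment, ← (treeConfigSuccEquiv d h Bool).sum_comp, Fintype.sum_prod_type,
    Fintype.sum_bool]
  simp only [isingWRooted, rootOf_treeConfigSuccEquiv, edgeProd_treeConfigSuccEquiv,
    leafSum_treeConfigSuccEquiv, iidSumMoment, subtreeWeight]
  cases r <;> simp

theorem weightedMoment_subtreeWeight (r : Bool) (k : ℕ) :
    weightedMoment (subtreeWeight d h ρ r) (leafSum d h) k
      = isingEdge ρ r true * isingMoment d h ρ k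
        + isingEdge ρ r false * rootedMoment d h ρ false k := by
  rw [weightedMoment, isingMoment, rootedMoment, mul_sum, mul_sum, ← sum_add_distrib]
  refine sum_congr rfl fun σ _ => ?_
  rw [subtreeWeight, isingWRooted, isingWRooted]
  cases rootOf σ <;> simp <;> ring

theorem weightedMoment_subtreeWeight_true (k : ℕ) :
    weightedMoment (subtreeWeight d h ρ true) (leafSum d h) k
      = ((1 + ρ) / 2 + (1 - ρ) / 2 * (-1) ^ k) * isingMoment d h ρ k := by
  rw [weightedMoment_subtreeWeight, rootedMoment_false]
  simp [isingEdge]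
  ring

theorem isingMoment_succ (k : ℕ) :
    isingMoment d (h + 1) ρ k
      = iidSumMoment (subtreeWeight d h ρ true) (leafSum d h) d k :=
  rootedMoment_succ true k

theorem isingMoment_mass : isingMoment d h ρ 0 = 1 := by
  induction h with
  | zero => exact (rootedMoment_height_zero true 0).trans (pow_zero _)
  | succ h ih =>
    rw [isingMoment_succ, iidSumMoment_mass, weightedMoment_subtreeWeight_true, ih]
    ring

theorem weightedMoment_subtreeWeight_mass :
    weightedMoment (subtreeWeight d h ρ true) (leafSum d h) 0 = 1 := by
  rw [weightedMoment_subtreeWeight_true, isingMoment_mass]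
  ring

theorem isingMoment_one : isingMoment d h ρ 1 = ((d : ℝ) * ρ) ^ h := by
  induction h with
  | zero => exact (rootedMoment_height_zero true 1).trans (by simp [spinVal])
  | succ h ih =>
    rw [isingMoment_succ, iidSumMoment_one weightedMoment_subtreeWeight_mass,
      weightedMoment_subtreeWeight_true, ih]
    ring

theorem isingMoment_two_succ :
    isingMoment d (h + 1) ρ 2 = d * isingMoment d h ρ 2
      + d * (d - 1) * ρ ^ 2 * ((d : ℝ) * ρ) ^ (2 * h) := by
  rw [isingMoment_succ, iidSumMoment_two weightedMoment_subtreeWeight_mass]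
  simp only [weightedMoment_subtreeWeight_true, isingMoment_one]
  ring

theorem isingMoment_three_succ :
    isingMoment d (h + 1) ρ 3 = d * ρ * isingMoment d h ρ 3
      + 3 * d * (d - 1) * ρ * ((d : ℝ) * ρ) ^ h * isingMoment d h ρ 2
      + d * (d - 1) * (d - 2) * ρ ^ 3 * ((d : ℝ) * ρ) ^ (3 * h) := by
  rw [isingMoment_succ, iidSumMoment_three weightedMoment_subtreeWeight_mass]
  simp only [weightedMoment_subtreeWeight_true, isingMoment_one]
  ring

theorem isingMoment_four_succ :
    isingMoment d (h + 1) ρ 4 = d * isingMoment d h ρ 4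
      + 4 * d * (d - 1) * ρ ^ 2 * ((d : ℝ) * ρ) ^ h * isingMoment d h ρ 3
      + 3 * d * (d - 1) * isingMoment d h ρ 2 ^ 2
      + 6 * d * (d - 1) * (d - 2) * ρ ^ 2 * ((d : ℝ) * ρ) ^ (2 * h) * isingMoment d h ρ 2
      + d * (d - 1) * (d - 2) * (d - 3) * ρ ^ 4 * ((d : ℝ) * ρ) ^ (4 * h) := by
  rw [isingMoment_succ, iidSumMoment_four weightedMoment_subtreeWeight_mass]
  simp only [weightedMoment_subtreeWeight_true, isingMoment_one]
  ring

end IsingMoments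

open Filter Topology Function

section AffineRecursion

theorem abs_inv_lt_one_of_one_lt {x : ℝ} (hx : 1 < x) : |x⁻¹| < 1 := by
  rw [abs_of_pos (inv_pos.2 (by linarith))]
  exact inv_lt_one_of_one_lt₀ hx

theorem le_pow_mul_add_of_le_mul_add {u : ℕ → ℝ} {q η : ℝ} (hq : 0 ≤ q) (hη : 0 ≤ η)
    (hu : ∀ n, u (n + 1) ≤ q * u n + (1 - q) * η) (n : ℕ) : u n ≤ q ^ n * u 0 + η := by
  induction n with
  | zero => simpa using hη
  | succ n ih =>
    calc u (n + 1) ≤ q * (q ^ n * u 0 + η) + (1 - q) * η :=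
          (hu n).trans (by gcongr)
      _ = q ^ (n + 1) * u 0 + η := by ring

theorem tendsto_of_affine_recursion {x b : ℕ → ℝ} {r B L : ℝ} (hr : |r| < 1)
    (hx : ∀ n, x (n + 1) = r * x n + b n) (hb : Tendsto b atTop (𝓝 B))
    (hL : IsFixedPt (fun y => r * y + B) L) : Tendsto x atTop (𝓝 L) := by
  have hL' : r * L + B = L := hL
  rw [Metric.tendsto_atTop]
  intro ε hε
  have hε2 : 0 < ε / 2 := half_pos hε
  obtain ⟨N, hN⟩ := Metric.tendsto_atTop.1 hb ((1 - |r|) * (ε / 2))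
    (mul_pos (sub_pos.2 hr) hε2)
  have contraction :
      ∀ n, |x (N + n + 1) - L| ≤ |r| * |x (N + n) - L| + (1 - |r|) * (ε / 2) := by
    intro n
    have step : x (N + n + 1) - L = r * (x (N + n) - L) + (b (N + n) - B) := by
      rw [hx]; linarith
    rw [step, ← abs_mul]
    exact (abs_add_le _ _).trans (by gcongr; exact (hN _ (by omega)).le)
  have geometric : Tendsto (fun n => |r| ^ n * |x N - L|) atTop (𝓝 0) := by
    simpa using (tendsto_pow_atTop_nhds_zero_of_lt_one (abs_nonneg r) hr).mul_const |x N - L|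
  obtain ⟨K, hK⟩ := (geometric.eventually (gt_mem_nhds hε2)).exists_forall_of_atTop
  refine ⟨N + K, fun n hn => ?_⟩
  obtain ⟨k, rfl⟩ := Nat.exists_eq_add_of_le hn
  have := le_pow_mul_add_of_le_mul_add (u := fun n => |x (N + n) - L|) (abs_nonneg r)
    hε2.le contraction (K + k)
  rw [Real.dist_eq, add_assoc]
  simp only [add_zero] at this
  linarith [hK (K + k) (by omega)]

end AffineRecursion

section NormalizedMoments

variable {d : ℕ} {ρ : ℝ}

noncomputable def normalizedMoment (d : ℕ) (ρ : ℝ) (k h : ℕ) : ℝ :=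
  isingMoment d h ρ k / ((d : ℝ) * ρ) ^ (k * h)

section Recursions

variable (hd : (d : ℝ) ≠ 0) (hρ : ρ ≠ 0)
include hd hρ

theorem normalizedMoment_two_succ (h : ℕ) :
    normalizedMoment d ρ 2 (h + 1)
      = (d * ρ ^ 2)⁻¹ * normalizedMoment d ρ 2 h + (d - 1) / d := by
  simp only [normalizedMoment, isingMoment_two_succ, mul_add, pow_add, mul_one]
  field_simp

theorem normalizedMoment_three_succ (h : ℕ) :
    normalizedMoment d ρ 3 (h + 1)
      = (d ^ 2 * ρ ^ 2)⁻¹ * normalizedMoment d ρ 3 h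
        + (3 * (d - 1) / (d ^ 2 * ρ ^ 2) * normalizedMoment d ρ 2 h
          + (d - 1) * (d - 2) / d ^ 2) := by
  simp only [normalizedMoment, isingMoment_three_succ, mul_add, pow_add, mul_one]
  field_simp
  ring

theorem normalizedMoment_four_succ (h : ℕ) :
    normalizedMoment d ρ 4 (h + 1)
      = (d ^ 3 * ρ ^ 4)⁻¹ * normalizedMoment d ρ 4 h
        + (4 * (d - 1) / (d ^ 3 * ρ ^ 2) * normalizedMoment d ρ 3 h
          + 3 * (d - 1) / (d ^ 3 * ρ ^ 4) * normalizedMoment d ρ 2 h ^ 2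
          + 6 * (d - 1) * (d - 2) / (d ^ 3 * ρ ^ 2) * normalizedMoment d ρ 2 h
          + (d - 1) * (d - 2) * (d - 3) / d ^ 3) := by
  simp only [normalizedMoment, isingMoment_four_succ, mul_add, pow_add, mul_one]
  field_simp
  ring

end Recursions

section Limits

section FixedPoints

variable (hd : (d : ℝ) ≠ 0) (hρ : ρ ≠ 0) (h2 : (d : ℝ) * ρ ^ 2 - 1 ≠ 0)
include hd hρ h2

theorem isFixedPt_C2const :
    IsFixedPt (fun c => (d * ρ ^ 2)⁻¹ * c + (d - 1) / d) (C2const d ρ) := by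
  rw [IsFixedPt, C2const]
  field_simp
  ring

theorem isFixedPt_C3const (h3 : (d : ℝ) ^ 2 * ρ ^ 2 - 1 ≠ 0) :
    IsFixedPt (fun c => (d ^ 2 * ρ ^ 2)⁻¹ * c
      + (3 * (d - 1) / (d ^ 2 * ρ ^ 2) * C2const d ρ + (d - 1) * (d - 2) / d ^ 2))
      (C3const d ρ) := by
  rw [IsFixedPt, C3const, C2const, mul_pow]
  field_simp
  ring

theorem isFixedPt_C4const (h4 : (d : ℝ) ^ 3 * ρ ^ 4 - 1 ≠ 0) :
    IsFixedPt (fun c => (d ^ 3 * ρ ^ 4)⁻¹ * c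
      + (4 * (d - 1) / (d ^ 3 * ρ ^ 2) * C3const d ρ
        + 3 * (d - 1) / (d ^ 3 * ρ ^ 4) * C2const d ρ ^ 2
        + 6 * (d - 1) * (d - 2) / (d ^ 3 * ρ ^ 2) * C2const d ρ
        + (d - 1) * (d - 2) * (d - 3) / d ^ 3)) (C4const d ρ) := by
  rw [IsFixedPt, C4const, C3const, C2const]
  field_simp
  ring

end FixedPoints

variable (hKS : 1 < (d : ℝ) * ρ ^ 2)
include hKS

theorem one_le_natCast_of_one_lt_mul_sq : (1 : ℝ) ≤ d := by
  rcases d with _ | d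
  · simp at hKS
    linarith
  · exact_mod_cast Nat.succ_pos d

theorem ne_zero_of_one_lt_mul_sq : ρ ≠ 0 := by
  rintro rfl
  simp at hKS
  linarith

theorem tendsto_normalizedMoment_two :
    Tendsto (normalizedMoment d ρ 2) atTop (𝓝 (C2const d ρ)) := by
  have hd : (d : ℝ) ≠ 0 := by linarith [one_le_natCast_of_one_lt_mul_sq hKS]
  have hρ := ne_zero_of_one_lt_mul_sq hKS
  exact tendsto_of_affine_recursion (abs_inv_lt_one_of_one_lt hKS)
    (normalizedMoment_two_succ hd hρ) tendsto_const_nhds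
    (isFixedPt_C2const hd hρ (by linarith))

theorem tendsto_normalizedMoment_three :
    Tendsto (normalizedMoment d ρ 3) atTop (𝓝 (C3const d ρ)) := by
  have hd1 := one_le_natCast_of_one_lt_mul_sq hKS
  have hd : (d : ℝ) ≠ 0 := by linarith
  have hρ := ne_zero_of_one_lt_mul_sq hKS
  have h3 : 1 < (d : ℝ) ^ 2 * ρ ^ 2 := by nlinarith
  exact tendsto_of_affine_recursion (abs_inv_lt_one_of_one_lt h3)
    (normalizedMoment_three_succ hd hρ)
    (((tendsto_normalizedMoment_two hKS).const_mul _).add_const _)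
    (isFixedPt_C3const hd hρ (by linarith) (by linarith))

theorem tendsto_normalizedMoment_four :
    Tendsto (normalizedMoment d ρ 4) atTop (𝓝 (C4const d ρ)) := by
  have hd1 := one_le_natCast_of_one_lt_mul_sq hKS
  have hd : (d : ℝ) ≠ 0 := by linarith
  have hρ := ne_zero_of_one_lt_mul_sq hKS
  have h4 : 1 < (d : ℝ) ^ 3 * ρ ^ 4 := by
    have : 1 < ((d : ℝ) * ρ ^ 2) ^ 2 := one_lt_pow₀ hKS two_ne_zero
    nlinarith
  have c2 := tendsto_normalizedMoment_two hKS
  exact tendsto_of_affine_recursion (abs_inv_lt_one_of_one_lt h4)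
    (normalizedMoment_four_succ hd hρ)
    (((((tendsto_normalizedMoment_three hKS).const_mul _).add ((c2.pow 2).const_mul _)).add
      (c2.const_mul _)).add_const _)
    (isFixedPt_C4const hd hρ (by linarith) (by linarith))

end Limits

end NormalizedMoments

theorem statement10_general (d : ℕ) (ρ : ℝ) (hKS : 1 < (d : ℝ) * ρ ^ 2) :
    Filter.Tendsto (fun h : ℕ => isingMoment d h ρ 4 / ((d : ℝ) * ρ) ^ (4 * h))
      Filter.atTop (nhds (C4const d ρ)) :=
  tendsto_normalizedMoment_four hKS

/-- Asymptotics of the fourth conditional moment of the leaf-spin sum of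
the Ising broadcast process above the Kesten–Stigum threshold. -/
theorem statement10 (d : ℕ) (hd : 2 ≤ d) (ρ : ℝ) (hρ0 : 0 < ρ) (hρ1 : ρ < 1)
    (hKS : 1 < (d : ℝ) * ρ ^ 2) :
    Filter.Tendsto (fun h : ℕ => isingMoment d h ρ 4 / ((d : ℝ) * ρ) ^ (4 * h))
      Filter.atTop (nhds (C4const d ρ)) :=
  statement10_general d ρ hKS
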